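/- Let k = 1 + ∑_{i=1}^{n-1} e^{y_i}. The (n-1)×(n-1) matrix J = (1/k²)(k·diag(e^{y_1},…,e^{y_{n-1}}) − w wᵀ), where w = (e^{y_1},…,e^{y_{n-1}})ᵀ, has determinant (1/kⁿ)·∏_{i=1}^{n-1} e^{y_i}. -/

import Mathlib

open Matrix Finset

/-- With `k = 1 + ∑ exp (y i)`, the matrix `(1/k²)(k·diag(e^{y}) − w wᵀ)` with
`w = (e^{y_1},…,e^{y_m})`, of size `m × m` (where `m = n - 1`), has determinant
`(1/k^(m+1)) · ∏ e^{y_i}`. -/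
theorem det_logratio_jacobian (m : ℕ) (y : Fin m → ℝ) :
    (((1 + ∑ i, Real.exp (y i)) ^ 2)⁻¹ •
        ((1 + ∑ i, Real.exp (y i)) • Matrix.diagonal (fun i => Real.exp (y i))
          - Matrix.vecMulVec (fun i => Real.exp (y i)) (fun i => Real.exp (y i)))).det
      = (1 / (1 + ∑ i, Real.exp (y i)) ^ (m + 1)) * ∏ i, Real.exp (y i) := by
  set k : ℝ := 1 + ∑ i, Real.exp (y i) with hk
  have hkpos : 0 < k := by
    have : (0:ℝ) ≤ ∑ i, Real.exp (y i) :=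
      Finset.sum_nonneg fun i _ => (Real.exp_pos _).le
    linarith
  have hkne : k ≠ 0 := hkpos.ne'
  set E : Fin m → ℝ := fun i => Real.exp (y i) with hE
  have hEpos : ∀ i, 0 < E i := fun i => Real.exp_pos _
  have hM : k • Matrix.diagonal E - Matrix.vecMulVec E E
      = Matrix.diagonal (fun i => k * E i) + Matrix.replicateCol Unit (-E) * Matrix.replicateRow Unit E := by
    rw [← Matrix.vecMulVec_eq, sub_eq_add_neg]
    congr 1
    · ext i j
      simp [Matrix.diagonal, Matrix.smul_apply, mul_ite]
    · ext i j
      simp [Matrix.vecMulVec_apply]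
  have hdetA : (Matrix.diagonal (fun i => k * E i)).det = k ^ m * ∏ i, E i := by
    rw [Matrix.det_diagonal, Finset.prod_mul_distrib, Finset.prod_const, Finset.card_univ,
      Fintype.card_fin]
  have hA : IsUnit (Matrix.diagonal (fun i => k * E i)).det := by
    rw [hdetA]
    exact (isUnit_iff_ne_zero.2 (by positivity))
  rw [Matrix.det_smul, hM, Matrix.det_add_replicateCol_mul_replicateRow hA, hdetA]
  have hinv : (Matrix.diagonal (fun i => k * E i))⁻¹
      = Matrix.diagonal (fun i => (k * E i)⁻¹) := by
    apply Matrix.inv_eq_right_inv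
    rw [Matrix.diagonal_mul_diagonal]
    convert Matrix.diagonal_one with i
    exact mul_inv_cancel₀ (by positivity)
  rw [hinv, Matrix.det_unique]
  have hsum : Finset.univ.sum E = k - 1 := by rw [hk]; ring
  have hval : ((1 + Matrix.replicateRow Unit E * Matrix.diagonal (fun i => (k * E i)⁻¹)
      * Matrix.replicateCol Unit (-E) : Matrix Unit Unit ℝ)) default default = k⁻¹ := by
    simp only [Matrix.add_apply, Matrix.one_apply_eq, Matrix.mul_apply, Matrix.replicateRow_apply,
      Matrix.replicateCol_apply, Matrix.diagonal_apply, mul_ite, mul_zero, Finset.sum_ite_eq', Finset.sum_ite_eq,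
      Finset.mem_univ, if_true, Pi.neg_apply, Finset.univ_unique, Finset.sum_singleton]
    have hterm : ∀ x : Fin m, E x * (k * E x)⁻¹ * -E x = -(E x) * k⁻¹ := by
      intro x
      have := (hEpos x).ne'
      field_simp
    simp only [hterm]
    rw [← Finset.sum_mul, Finset.sum_neg_distrib, hsum]
    field_simp
    ring
  rw [hval, Fintype.card_fin, inv_pow, ← pow_mul]
  field_simp
  ring
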